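/- arXiv:1001.4946 — 14 statements merged into one kernel-verified Lean document; each statement's English description precedes it below -/
import Mathlib

section
/- Suppose T is a totally skew-symmetric trilinear form on V and define the trilinear form F by F(x,y,z) = (1/2)(T(x,y,Pz) - T(x,Py,z)). Then the cyclic sum F(x,y,z) + F(y,z,x) + F(z,x,y) = 0 for all x, y, z in V. (This is the algebraic core of Theorem 3.2: a Riemannian almost product manifold admitting a natural connection with totally skew-symmetric torsion lies in the class W₃.) -/
open scoped RealInnerProductSpace

/-- algebraic core of Theorem 3.2: if `T` is a totally skew-symmetric
trilinear form on `V` and `F(x,y,z) = (1/2)(T(x,y,Pz) - T(x,Py,z))`, then the cyclic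
sum of `F` vanishes. -/
theorem stmt_0 {V : Type*} [NormedAddCommGroup V] [InnerProductSpace ℝ V]
    [FiniteDimensional ℝ V]
    (P : V →ₗ[ℝ] V) (hP : ∀ x, P (P x) = x)
    (hPg : ∀ x y, ⟪P x, P y⟫ = ⟪x, y⟫)
    (T : V →ₗ[ℝ] V →ₗ[ℝ] V →ₗ[ℝ] ℝ)
    (hT1 : ∀ x y z, T x y z = -(T y x z))
    (hT2 : ∀ x y z, T x y z = -(T x z y))
    (F : V → V → V → ℝ)
    (hF : ∀ x y z, F x y z = (1/2) * (T x y (P z) - T x (P y) z)) :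
    ∀ x y z, F x y z + F y z x + F z x y = 0 := by
  have cyc : ∀ a b c, T a b c = T c a b := by
    intro a b c
    rw [hT1, hT2 b a c, hT2 c a b, hT1 c b a]
  intro x y z
  have h1 := cyc x (P y) z
  have h2 := cyc y (P z) x
  have h3 := cyc z (P x) y
  rw [hF, hF, hF]
  linarith
end

section
/- Let F be a trilinear form on V with the W₃-symmetries, and define T(x,y,z) = (1/2)(F(x,y,Pz) + F(y,z,Px) + F(z,x,Py)). Then T is totally skew-symmetric and F(x,y,z) = (1/2)(T(x,y,Pz) - T(x,Py,z)) for all x, y, z. (Existence part of Theorem 3.4: on any Riemannian almost product W₃-manifold there exists a RPT-connection whose torsion is expressed by F.) -/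
open scoped RealInnerProductSpace

/-- existence part of Theorem 3.4: if `F` is a trilinear form with the
W₃-symmetries and `T(x,y,z) = (1/2)(F(x,y,Pz) + F(y,z,Px) + F(z,x,Py))`, then `T` is
totally skew-symmetric and `F(x,y,z) = (1/2)(T(x,y,Pz) - T(x,Py,z))`. -/
theorem stmt_1 {V : Type*} [NormedAddCommGroup V] [InnerProductSpace ℝ V]
    [FiniteDimensional ℝ V]
    (P : V →ₗ[ℝ] V) (hP : ∀ x, P (P x) = x)
    (hPg : ∀ x y, ⟪P x, P y⟫ = ⟪x, y⟫)
    (F : V →ₗ[ℝ] V →ₗ[ℝ] V →ₗ[ℝ] ℝ)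
    (hF1 : ∀ x y z, F x y z = F x z y)
    (hF2 : ∀ x y z, F x y z = -(F x (P y) (P z)))
    (hF3 : ∀ x y z, F x y z + F y z x + F z x y = 0)
    (T : V → V → V → ℝ)
    (hT : ∀ x y z, T x y z = (1/2) * (F x y (P z) + F y z (P x) + F z x (P y))) :
    (∀ x y z, T x y z = -(T y x z)) ∧ (∀ x y z, T x y z = -(T x z y)) ∧
      (∀ x y z, F x y z = (1/2) * (T x y (P z) - T x (P y) z)) := by
  -- key pair identity: F a b c + F b a c = -(F c a b)
  have pair : ∀ a b c, F a b c + F b a c = -(F c a b) := by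
    intro a b c
    have A := hF3 a b c
    have B := hF3 b a c
    have h1 := hF1 b c a
    have h2 := hF1 a c b
    have h3 := hF1 c b a
    linarith
  have key : ∀ x y z,
      F x y (P z) + F y z (P x) + F z x (P y)
        + F y x (P z) + F x z (P y) + F z y (P x) = 0 := by
    intro x y z
    have p1 := pair x y (P z)
    have p2 := pair y z (P x)
    have p3 := pair z x (P y)
    have q1 : F (P z) x y = -(F (P z) (P x) (P y)) := hF2 (P z) x y
    have q2 : F (P x) y z = -(F (P x) (P y) (P z)) := hF2 (P x) y z
    have q3 : F (P y) z x = -(F (P y) (P z) (P x)) := hF2 (P y) z x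
    have c1 := hF3 (P x) (P y) (P z)
    linarith
  refine ⟨?_, ?_, ?_⟩
  · intro x y z
    have := key x y z
    rw [hT x y z, hT y x z]
    linarith
  · intro x y z
    have := key x y z
    rw [hT x y z, hT x z y]
    linarith
  · intro x y z
    rw [hT x y (P z), hT x (P y) z]
    simp only [hP]
    have e1 : F x (P y) (P z) = -(F x y z) := by
      have := hF2 x y z; linarith
    have e3 := hF1 y (P z) (P x)
    have e2 : F y (P x) (P z) = -(F y x z) := by
      have := hF2 y x z; linarith
    have e5 := hF1 (P y) z (P x)
    have e6 := hF1 (P z) x (P y)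
    have e7 : F (P z) (P y) x = -(F (P z) y (P x)) := by
      have := hF2 (P z) y (P x); rw [hP] at this; linarith
    have c1 := hF3 (P z) y (P x)
    have e9 : F (P x) (P z) y = F (P x) y (P z) := hF1 (P x) (P z) y
    have e10 : F (P x) y (P z) = -(F (P x) (P y) z) := by
      have := hF2 (P x) y (P z); rw [hP] at this; linarith
    have e11 : F (P y) (P x) z = -(F (P y) x (P z)) := by
      have := hF2 (P y) x (P z); rw [hP] at this; linarith
    have p1 := pair (P x) (P y) z
    have p2 := pair x y z
    have e12 : F z (P x) (P y) = -(F z x y) := by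
      have := hF2 z x y; linarith
    linarith
end

section
/- Let F be a trilinear form on V with the W₃-symmetries and define T(x,y,z) = (1/2)(F(x,y,Pz) + F(y,z,Px) + F(z,x,Py)). Then the projections of T onto the invariant subspaces of torsion tensors satisfy: p₁(x,y,z) = 0, p₂(x,y,z) = F(z,x,Py), p₃(x,y,z) = (1/2)(F(x,y,Pz) + F(y,z,Px) - F(z,x,Py)), and p₄(x,y,z) = 0, for all x, y, z; moreover if F ≠ 0 then p₂ ≠ 0 and p₃ ≠ 0, so T lies in T₂ ⊕ T₃ but in neither T₂ nor T₃ alone. (The decomposition claims of Theorem 3.4.) -/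
open scoped RealInnerProductSpace

/-- decomposition claims of Theorem 3.4: for the torsion
`T(x,y,z) = (1/2)(F(x,y,Pz) + F(y,z,Px) + F(z,x,Py))` of the RPT-connection, the
projections onto the invariant subspaces of torsion tensors satisfy `p₁ = 0`,
`p₂(x,y,z) = F(z,x,Py)`, `p₃(x,y,z) = (1/2)(F(x,y,Pz)+F(y,z,Px)-F(z,x,Py))`, `p₄ = 0`;
moreover if `F ≠ 0` then `p₂ ≠ 0` and `p₃ ≠ 0`. -/
theorem stmt_3 {V : Type*} [NormedAddCommGroup V] [InnerProductSpace ℝ V]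
    [FiniteDimensional ℝ V]
    (P : V →ₗ[ℝ] V) (hP : ∀ x, P (P x) = x)
    (hPg : ∀ x y, ⟪P x, P y⟫ = ⟪x, y⟫)
    (F : V →ₗ[ℝ] V →ₗ[ℝ] V →ₗ[ℝ] ℝ)
    (hF1 : ∀ x y z, F x y z = F x z y)
    (hF2 : ∀ x y z, F x y z = -(F x (P y) (P z)))
    (hF3 : ∀ x y z, F x y z + F y z x + F z x y = 0)
    (T : V → V → V → ℝ)
    (hT : ∀ x y z, T x y z = (1/2) * (F x y (P z) + F y z (P x) + F z x (P y)))
    (p1 p2 p3 p4 : V → V → V → ℝ)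
    (hp1 : ∀ x y z, p1 x y z = (1/8) * (2 * T x y z - T y z x - T z x y
      - T (P z) x (P y) + T (P y) z (P x) + T z (P x) (P y) - 2 * T (P x) (P y) z
      + T (P y) (P z) x + T (P z) (P x) y - T y (P z) (P x)))
    (hp2 : ∀ x y z, p2 x y z = (1/8) * (2 * T x y z + T y z x + T z x y
      + T (P z) x (P y) - T (P y) z (P x) - T z (P x) (P y) - 2 * T (P x) (P y) z
      - T (P y) (P z) x - T (P z) (P x) y + T y (P z) (P x)))
    (hp3 : ∀ x y z, p3 x y z = (1/4) * (T x y z + T (P x) (P y) z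
      - T (P x) y (P z) - T x (P y) (P z)))
    (hp4 : ∀ x y z, p4 x y z = (1/4) * (T x y z + T (P x) (P y) z
      + T (P x) y (P z) + T x (P y) (P z))) :
    (∀ x y z, p1 x y z = 0) ∧
    (∀ x y z, p2 x y z = F z x (P y)) ∧
    (∀ x y z, p3 x y z = (1/2) * (F x y (P z) + F y z (P x) - F z x (P y))) ∧
    (∀ x y z, p4 x y z = 0) ∧
    ((∃ x y z, F x y z ≠ 0) →
      (∃ x y z, p2 x y z ≠ 0) ∧ (∃ x y z, p3 x y z ≠ 0)) := by
  have hPP : ∀ a b c, F a (P b) (P c) = -(F a b c) := fun a b c => by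
    have := hF2 a b c; linarith
  have hPM : ∀ a b c, F a (P b) c = -(F a b (P c)) := fun a b c => by
    rw [hF2 a (P b) c, hP]
  have h1 : ∀ x y z, p1 x y z = 0 := by
    intro x y z
    rw [hp1]
    simp only [hT, hP]
    ring
  have h2 : ∀ x y z, p2 x y z = F z x (P y) := by
    intro x y z
    rw [hp2]
    simp only [hT, hP]
    linear_combination (1/4:ℝ) * hPM x y z + (-1/4:ℝ) * hF3 x (P y) z +
      (1/4:ℝ) * hF3 y z (P x) + (-1/2:ℝ) * hPM z x y + (-1/4:ℝ) * hPP (P x) y z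
  have h3 : ∀ x y z, p3 x y z = (1/2) * (F x y (P z) + F y z (P x) - F z x (P y)) := by
    intro x y z
    rw [hp3]
    simp only [hT, hP]
    linear_combination (-1/4:ℝ) * hPM x y z + (-1/8:ℝ) * hF3 x y (P z) +
      (1/8:ℝ) * hF3 x (P y) z + (-3/8:ℝ) * hF3 y z (P x) + (1/2:ℝ) * hPM z x y +
      (1/4:ℝ) * hPP (P x) y z + (-1/8:ℝ) * hF3 (P x) (P y) (P z)
  have h4 : ∀ x y z, p4 x y z = 0 := by
    intro x y z
    rw [hp4]
    simp only [hT, hP]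
    linear_combination (1/8:ℝ) * hF3 x y (P z) + (1/8:ℝ) * hF3 x (P y) z +
      (1/8:ℝ) * hF3 y z (P x) + (1/8:ℝ) * hF3 (P x) (P y) (P z)
  refine ⟨h1, h2, h3, h4, ?_⟩
  rintro ⟨x0, y0, z0, h0⟩
  constructor
  · refine ⟨y0, P z0, x0, ?_⟩
    rw [h2, hP]
    exact h0
  · by_contra hc
    push_neg at hc
    have key : ∀ x y z, F x y (P z) = 0 := by
      intro x y z
      have a1 := (h3 x y z).symm.trans (hc x y z)
      have a2 := (h3 z x y).symm.trans (hc z x y)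
      linarith
    have : F x0 y0 z0 = 0 := by
      have := key x0 y0 (P z0)
      rwa [hP] at this
    exact h0 this
end

section
/- Let F be a trilinear form on V with the W₃-symmetries and define T(x,y,z) = (1/2)(F(x,y,Pz) + F(y,z,Px) + F(z,x,Py)). Then (1/2)T(x,y,z) = -(1/4){F(x,Py,z) - F(Px,y,z) - 2F(y,Px,z)} for all x, y, z. (Formula (27) for the tensor Q of the transformation from the Levi-Civita connection to the RPT-connection.) -/
open scoped RealInnerProductSpace

/-- formula (27): for the torsion `T` of the RPT-connection one has
`Q(x,y,z) = (1/2)T(x,y,z) = -(1/4){F(x,Py,z) - F(Px,y,z) - 2F(y,Px,z)}`. -/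
theorem stmt_4 {V : Type*} [NormedAddCommGroup V] [InnerProductSpace ℝ V]
    [FiniteDimensional ℝ V]
    (P : V →ₗ[ℝ] V) (hP : ∀ x, P (P x) = x)
    (hPg : ∀ x y, ⟪P x, P y⟫ = ⟪x, y⟫)
    (F : V →ₗ[ℝ] V →ₗ[ℝ] V →ₗ[ℝ] ℝ)
    (hF1 : ∀ x y z, F x y z = F x z y)
    (hF2 : ∀ x y z, F x y z = -(F x (P y) (P z)))
    (hF3 : ∀ x y z, F x y z + F y z x + F z x y = 0)
    (T : V → V → V → ℝ)
    (hT : ∀ x y z, T x y z = (1/2) * (F x y (P z) + F y z (P x) + F z x (P y))) :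
    ∀ x y z, (1/2) * T x y z
      = -(1/4) * (F x (P y) z - F (P x) y z - 2 * F y (P x) z) := by
  intro x y z
  have h1 : F x y (P z) = -(F x (P y) z) := by rw [hF2 x y (P z), hP]
  have h2 : F y z (P x) = -(F y (P z) x) := by rw [hF2 y z (P x), hP]
  have h3 : F z x (P y) = -(F z (P x) y) := by rw [hF2 z x (P y), hP]
  have hB : F y (P z) x = -(F y (P x) z) := by
    rw [hF1 y (P z) x, hF2 y x (P z), hP]
  have hc := hF3 (P x) y z
  have hd : F y z (P x) = F y (P x) z := hF1 y z (P x)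
  rw [hT x y z, h1, h2, h3, hB]
  linarith
end

section
/- Let F be a trilinear form on V with the W₃-symmetries, define T(x,y,z) = (1/2)(F(x,y,Pz) + F(y,z,Px) + F(z,x,Py)), and let (e₁, …, eₙ) be an orthonormal basis of V. Then the sum over all indices i, j, k of T(eᵢ,eⱼ,eₖ)² equals (3/2) times the sum over all indices i, j, k of F(eᵢ,eⱼ,eₖ)². (This is the computational core of Proposition 3.5: the scalar curvatures of the Levi-Civita connection and the RPT-connection on a Riemannian almost product W₃-manifold satisfy τ = τ' + (3/8)‖∇P‖².) -/
/-!
Write `f i j k = F(eᵢ,eⱼ,eₖ)` and `g i j k = F(eᵢ,eⱼ,Peₖ)`, so that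
`2 T(eᵢ,eⱼ,eₖ) = g i j k + g j k i + g k i j`. Squaring a cyclic sum and summing over all indices
gives `3 ∑ a² + 6 ∑ a i j k * a j k i` for any array `a`. For `f` the cyclic sum vanishes, so
`∑ f i j k * f j k i = -½ ∑ f²`. Since `P` is a symmetric involution, moving it across the
contraction in `k` gives `∑ g² = ∑ f²` and, with `F(x,Py,Pz) = -F(x,y,z)`,
`∑ g i j k * g j k i = -∑ f i j k * f j k i`. Hence `4 ∑ T² = 3 ∑ f² + 3 ∑ f²`.
-/

open scoped RealInnerProductSpace

section CyclicSums

variable {ι : Type*} [Fintype ι]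

lemma Finset.sum_sum_sum_cyclic (h : ι → ι → ι → ℝ) :
    ∑ i, ∑ j, ∑ k, h j k i = ∑ i, ∑ j, ∑ k, h i j k := by
  rw [Finset.sum_comm]
  exact Finset.sum_congr rfl fun _ _ => Finset.sum_comm

lemma Finset.sum_sum_sum_add_cyclic_sq (a : ι → ι → ι → ℝ) :
    ∑ i, ∑ j, ∑ k, (a i j k + a j k i + a k i j) ^ 2
      = 3 * ∑ i, ∑ j, ∑ k, a i j k ^ 2 + 6 * ∑ i, ∑ j, ∑ k, a i j k * a j k i := by
  have expand : ∀ i j k, (a i j k + a j k i + a k i j) ^ 2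
      = a i j k ^ 2 + a j k i ^ 2 + a k i j ^ 2 + 2 * (a i j k * a j k i)
        + 2 * (a j k i * a k i j) + 2 * (a k i j * a i j k) := fun _ _ _ => by ring
  have sq₁ : ∑ i, ∑ j, ∑ k, a j k i ^ 2 = ∑ i, ∑ j, ∑ k, a i j k ^ 2 :=
    sum_sum_sum_cyclic fun i j k => a i j k ^ 2
  have sq₂ : ∑ i, ∑ j, ∑ k, a k i j ^ 2 = ∑ i, ∑ j, ∑ k, a i j k ^ 2 :=
    (sum_sum_sum_cyclic fun i j k => a j k i ^ 2).trans sq₁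
  have mul₁ : ∑ i, ∑ j, ∑ k, a j k i * a k i j = ∑ i, ∑ j, ∑ k, a i j k * a j k i :=
    sum_sum_sum_cyclic fun i j k => a i j k * a j k i
  have mul₂ : ∑ i, ∑ j, ∑ k, a k i j * a i j k = ∑ i, ∑ j, ∑ k, a i j k * a j k i :=
    (sum_sum_sum_cyclic fun i j k => a j k i * a k i j).trans mul₁
  simp only [expand, Finset.sum_add_distrib, ← Finset.mul_sum]
  rw [sq₁, sq₂, mul₁, mul₂]
  ring

lemma Finset.sum_sum_sum_half_add_cyclic_sq {f g : ι → ι → ι → ℝ}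
    (hf : ∀ i j k, f i j k + f j k i + f k i j = 0)
    (hsq : ∑ i, ∑ j, ∑ k, g i j k ^ 2 = ∑ i, ∑ j, ∑ k, f i j k ^ 2)
    (hmul : ∑ i, ∑ j, ∑ k, g i j k * g j k i = -∑ i, ∑ j, ∑ k, f i j k * f j k i) :
    ∑ i, ∑ j, ∑ k, ((1/2) * (g i j k + g j k i + g k i j)) ^ 2
      = (3/2) * ∑ i, ∑ j, ∑ k, f i j k ^ 2 := by
  have hf₀ := sum_sum_sum_add_cyclic_sq f
  simp only [hf, zero_pow two_ne_zero, Finset.sum_const_zero] at hf₀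
  simp only [mul_pow, ← Finset.mul_sum]
  linarith [sum_sum_sum_add_cyclic_sq g]

end CyclicSums

section Contraction

variable {ι V : Type*} [Fintype ι] [NormedAddCommGroup V] [InnerProductSpace ℝ V]

lemma LinearMap.isSymmetric_of_involutive_of_inner_map_map {P : V →ₗ[ℝ] V}
    (hP : ∀ x, P (P x) = x) (hPg : ∀ x y, ⟪P x, P y⟫ = ⟪x, y⟫) : P.IsSymmetric := by
  intro x y
  rw [← hPg, hP]

lemma OrthonormalBasis.inner_sum_apply_smul (b : OrthonormalBasis ι ℝ V) (φ : V →ₗ[ℝ] ℝ)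
    (x : V) : ⟪∑ i, φ (b i) • b i, x⟫ = φ x := by
  conv_rhs => rw [← b.sum_repr' x]
  simp only [sum_inner, real_inner_smul_left, map_sum, map_smul, smul_eq_mul]
  exact Finset.sum_congr rfl fun i _ => by rw [real_inner_comm, mul_comm]

lemma OrthonormalBasis.sum_map_mul_eq_sum_mul_map (b : OrthonormalBasis ι ℝ V) {A : V →ₗ[ℝ] V}
    (hA : A.IsSymmetric) (φ ψ : V →ₗ[ℝ] ℝ) :
    ∑ i, φ (A (b i)) * ψ (b i) = ∑ i, φ (b i) * ψ (A (b i)) := by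
  set u := ∑ i, φ (b i) • b i
  set w := ∑ i, ψ (b i) • b i
  have hu : ∀ x, φ x = ⟪u, x⟫ := fun x => (b.inner_sum_apply_smul φ x).symm
  have hw : ∀ x, ψ x = ⟪x, w⟫ := fun x => by rw [real_inner_comm, b.inner_sum_apply_smul]
  calc ∑ i, φ (A (b i)) * ψ (b i)
      = ∑ i, ⟪A u, b i⟫ * ⟪b i, w⟫ := by simp only [hu, hw, hA u]
    _ = ⟪u, A w⟫ := by rw [b.sum_inner_mul_inner, hA]
    _ = ∑ i, ⟪u, b i⟫ * ⟪b i, A w⟫ := (b.sum_inner_mul_inner u (A w)).symm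
    _ = ∑ i, φ (b i) * ψ (A (b i)) := by simp only [hu, hw, hA _ w]

lemma OrthonormalBasis.sum_map_mul_map_of_involutive (b : OrthonormalBasis ι ℝ V)
    {A : V →ₗ[ℝ] V} (hA : A.IsSymmetric) (hA₂ : ∀ x, A (A x) = x) (φ ψ : V →ₗ[ℝ] ℝ) :
    ∑ i, φ (A (b i)) * ψ (A (b i)) = ∑ i, φ (b i) * ψ (b i) := by
  simpa only [LinearMap.comp_apply, hA₂] using b.sum_map_mul_eq_sum_mul_map hA φ (ψ ∘ₗ A)

end Contraction

theorem stmt_5_general {V : Type*} [NormedAddCommGroup V] [InnerProductSpace ℝ V]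
    (P : V →ₗ[ℝ] V) (hP : ∀ x, P (P x) = x)
    (hPg : ∀ x y, ⟪P x, P y⟫ = ⟪x, y⟫)
    (F : V →ₗ[ℝ] V →ₗ[ℝ] V →ₗ[ℝ] ℝ)
    (hF2 : ∀ x y z, F x y z = -(F x (P y) (P z)))
    (hF3 : ∀ x y z, F x y z + F y z x + F z x y = 0)
    (T : V → V → V → ℝ)
    (hT : ∀ x y z, T x y z = (1/2) * (F x y (P z) + F y z (P x) + F z x (P y)))
    (n : ℕ) (b : OrthonormalBasis (Fin n) ℝ V) :
    ∑ i : Fin n, ∑ j : Fin n, ∑ k : Fin n, (T (b i) (b j) (b k)) ^ 2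
      = (3/2) * ∑ i : Fin n, ∑ j : Fin n, ∑ k : Fin n, (F (b i) (b j) (b k)) ^ 2 := by
  have hPsymm := LinearMap.isSymmetric_of_involutive_of_inner_map_map hP hPg
  have hsq : ∀ i j, ∑ k, F (b i) (b j) (P (b k)) ^ 2 = ∑ k, F (b i) (b j) (b k) ^ 2 :=
    fun i j => by
      simpa only [sq] using b.sum_map_mul_map_of_involutive hPsymm hP (F (b i) (b j)) _
  have hmul : ∀ i j, ∑ k, F (b i) (b j) (P (b k)) * F (b j) (b k) (P (b i))
      = ∑ k, F (b i) (b j) (b k) * -F (b j) (b k) (b i) := fun i j => by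
    have moveP := b.sum_map_mul_eq_sum_mul_map hPsymm (F (b i) (b j)) ((F (b j)).flip (P (b i)))
    simp only [LinearMap.flip_apply] at moveP
    rw [moveP]
    exact Finset.sum_congr rfl fun k _ => by rw [hF2 (b j) (b k), neg_neg]
  simp only [hT]
  refine Finset.sum_sum_sum_half_add_cyclic_sq (fun i j k => hF3 (b i) (b j) (b k))
    (Finset.sum_congr rfl fun i _ => Finset.sum_congr rfl fun j _ => hsq i j) ?_
  simp only [hmul, mul_neg, Finset.sum_neg_distrib]

/-- computational core of Proposition 3.5: for the torsion `T` of the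
RPT-connection and an orthonormal basis `(e₁,…,eₙ)` of `V`, the sum of `T(eᵢ,eⱼ,eₖ)²`
equals `(3/2)` times the sum of `F(eᵢ,eⱼ,eₖ)²`; equivalently `τ = τ' + (3/8)‖∇P‖²`. -/
theorem stmt_5 {V : Type*} [NormedAddCommGroup V] [InnerProductSpace ℝ V]
    [FiniteDimensional ℝ V]
    (P : V →ₗ[ℝ] V) (hP : ∀ x, P (P x) = x)
    (hPg : ∀ x y, ⟪P x, P y⟫ = ⟪x, y⟫)
    (F : V →ₗ[ℝ] V →ₗ[ℝ] V →ₗ[ℝ] ℝ)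
    (hF1 : ∀ x y z, F x y z = F x z y)
    (hF2 : ∀ x y z, F x y z = -(F x (P y) (P z)))
    (hF3 : ∀ x y z, F x y z + F y z x + F z x y = 0)
    (T : V → V → V → ℝ)
    (hT : ∀ x y z, T x y z = (1/2) * (F x y (P z) + F y z (P x) + F z x (P y)))
    (n : ℕ) (b : OrthonormalBasis (Fin n) ℝ V) :
    ∑ i : Fin n, ∑ j : Fin n, ∑ k : Fin n, (T (b i) (b j) (b k)) ^ 2
      = (3/2) * ∑ i : Fin n, ∑ j : Fin n, ∑ k : Fin n, (F (b i) (b j) (b k)) ^ 2 :=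
  stmt_5_general P hP hPg F hF2 hF3 T hT n b
end

section
/- Let F be a trilinear form on V with the W₃-symmetries and define T(x,y,z) = (1/2)(F(x,y,Pz) + F(y,z,Px) + F(z,x,Py)). Then T = 0 if and only if F = 0. (This is the core of Corollary 3.6: the scalar curvatures for the Levi-Civita connection and the RPT-connection on a Riemannian almost product W₃-manifold are equal if and only if the manifold is a Riemannian P-manifold, i.e. ∇P = 0.) -/
open scoped RealInnerProductSpace

/-- core of Corollary 3.6: for the torsion `T` of the RPT-connection,
`T = 0` if and only if `F = 0` (i.e. the scalar curvatures of `∇` and `∇'` are equal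
iff the manifold is a Riemannian P-manifold). -/
theorem stmt_6 {V : Type*} [NormedAddCommGroup V] [InnerProductSpace ℝ V]
    [FiniteDimensional ℝ V]
    (P : V →ₗ[ℝ] V) (hP : ∀ x, P (P x) = x)
    (hPg : ∀ x y, ⟪P x, P y⟫ = ⟪x, y⟫)
    (F : V →ₗ[ℝ] V →ₗ[ℝ] V →ₗ[ℝ] ℝ)
    (hF1 : ∀ x y z, F x y z = F x z y)
    (hF2 : ∀ x y z, F x y z = -(F x (P y) (P z)))
    (hF3 : ∀ x y z, F x y z + F y z x + F z x y = 0)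
    (T : V → V → V → ℝ)
    (hT : ∀ x y z, T x y z = (1/2) * (F x y (P z) + F y z (P x) + F z x (P y))) :
    (∀ x y z, T x y z = 0) ↔ (∀ x y z, F x y z = 0) := by
  constructor
  · intro h
    have G : ∀ a b c, F a b (P c) + F b c (P a) + F c a (P b) = 0 := by
      intro a b c
      have h1 := hT a b c
      have h2 := h a b c
      linarith
    intro x y z
    have e1 := hF1 x y z
    have e2 := hF2 x y z
    have e3 := hF3 x y z
    have e4 := G x (P y) z; simp only [hP] at e4
    have e5 := hF1 x (P y) (P z)
    have e6 := hF3 x z y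
    have e7 := G x (P z) y; simp only [hP] at e7
    have e8 := G (P x) y z; simp only [hP] at e8
    have e9 := hF1 (P x) y (P z)
    have e10 := hF1 (P x) (P y) z
    have e11 := hF3 (P x) (P y) z
    have e12 := G (P x) z y; simp only [hP] at e12
    have e13 := hF3 (P x) (P z) y
    linarith
  · intro h x y z
    rw [hT]
    simp [h]
end

section
/- Let F be a trilinear form on V with the W₃-symmetries. Define the trilinear forms Q(x,y,z) = -(1/4){F(x,Py,z) - F(Px,y,z) - 2F(y,Px,z)} (the transformation tensor of the RPT-connection), Qᶜ(x,y,z) = -(1/4){F(y,Px,z) - F(Py,x,z) + 2F(x,Py,z)} (the transformation tensor of the canonical connection), and Qᴾ(x,y,z) = -(1/2)F(x,Py,z) (the transformation tensor of the P-connection). Then Qᴾ = (1/2)(Qᶜ + Q). (Proposition 3.7: the P-connection on a Riemannian almost product W₃-manifold is the average connection of the canonical connection and the RPT-connection.) -/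
open scoped RealInnerProductSpace

/-- Proposition 3.7: the P-connection is the average of the canonical
connection and the RPT-connection: `Qᴾ = (1/2)(Qᶜ + Q)`. -/
theorem stmt_7 {V : Type*} [NormedAddCommGroup V] [InnerProductSpace ℝ V]
    [FiniteDimensional ℝ V]
    (P : V →ₗ[ℝ] V) (hP : ∀ x, P (P x) = x)
    (hPg : ∀ x y, ⟪P x, P y⟫ = ⟪x, y⟫)
    (F : V →ₗ[ℝ] V →ₗ[ℝ] V →ₗ[ℝ] ℝ)
    (hF1 : ∀ x y z, F x y z = F x z y)
    (hF2 : ∀ x y z, F x y z = -(F x (P y) (P z)))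
    (hF3 : ∀ x y z, F x y z + F y z x + F z x y = 0)
    (Q QC QP : V → V → V → ℝ)
    (hQ : ∀ x y z, Q x y z = -(1/4) * (F x (P y) z - F (P x) y z - 2 * F y (P x) z))
    (hQC : ∀ x y z, QC x y z = -(1/4) * (F y (P x) z - F (P y) x z + 2 * F x (P y) z))
    (hQP : ∀ x y z, QP x y z = -(1/2) * F x (P y) z) :
    ∀ x y z, QP x y z = (1/2) * (QC x y z + Q x y z) := by
  intro x y z
  have e1 := hF3 x (P y) z
  have e2 := hF3 y (P x) z
  have e3 : F z x (P y) = -(F z y (P x)) := by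
    rw [hF1 z x (P y), hF2 z (P y) x, hP]
  rw [hQP, hQC, hQ]
  linarith [e1, e2, e3, hF1 (P y) z x, hF1 (P x) z y]
end

section
/- Let V be a finite-dimensional real vector space, let A : V × V × V × V → ℝ be a multilinear map that is alternating in its last three arguments (i.e. for each fixed x, the map (y,z,w) ↦ A(x,y,z,w) is a 3-form), and let σ : V × V × V × V → ℝ be an alternating multilinear 4-form. If A(x,y,z,w) + A(y,z,x,w) + A(z,x,y,w) + σ(x,y,z,w) = 0 for all x, y, z, w, then A(x,y,z,w) = -(1/3)σ(x,y,z,w) for all x, y, z, w. (This is the key step (30') ⇒ (33') in the proof of Theorem 4.1, applied with A = ∇'T and σ = σᵀ: it shows that the curvature tensor of the RPT-connection is a Riemannian P-tensor if and only if relation (31') holds.) -/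
/-- key step (30') ⇒ (33') in the proof of Theorem 4.1: if `A` is
multilinear and alternating in its last three arguments, `σ` is an alternating 4-form,
and the cyclic sum `A(x,y,z,w) + A(y,z,x,w) + A(z,x,y,w) + σ(x,y,z,w) = 0`, then
`A(x,y,z,w) = -(1/3)σ(x,y,z,w)`. -/
theorem stmt_8 {V : Type*} [AddCommGroup V] [Module ℝ V] [FiniteDimensional ℝ V]
    (A : V → V → V → V → ℝ)
    (hA1 : ∀ x y z w, A x y z w = -(A x z y w))
    (hA2 : ∀ x y z w, A x y z w = -(A x y w z))
    (σ : V → V → V → V → ℝ)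
    (hσ1 : ∀ x y z w, σ x y z w = -(σ y x z w))
    (hσ2 : ∀ x y z w, σ x y z w = -(σ x z y w))
    (hσ3 : ∀ x y z w, σ x y z w = -(σ x y w z))
    (h : ∀ x y z w, A x y z w + A y z x w + A z x y w + σ x y z w = 0) :
    ∀ x y z w, A x y z w = -(1/3) * σ x y z w := by
  intro x y z w
  linarith [h x y z w, h x y w z, h w y z x, h z w x y,
    hA1 y z x w, hA2 x y z w, hA1 y w x z, hA2 y x z w,
    hA2 w y z x, hA1 w y x z, hA2 y z w x, hA2 z w y x,
    hA1 z w x y, hA2 z x w y, hA2 w x z y, hA2 x z w y,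
    hA1 x z y w, hA1 x y z w,
    hσ3 x y z w, hσ1 w y z x, hσ2 y w z x, hσ3 y z w x, hσ2 y z x w, hσ1 y x z w,
    hσ1 z w x y, hσ3 w z x y, hσ2 w z y x]
end

section
/- For the bracket (50) on ℝ⁴, the standard inner product g, and the linear involution P with Pe₁ = e₃, Pe₂ = e₄, Pe₃ = e₁, Pe₄ = e₂, the Killing condition g([x,y],Pz) + g([x,z],Py) = 0 holds for all x, y, z in ℝ⁴ (i.e. the associated metric g̃(x,y) = g(x,Py) is a Killing metric on the Lie group example (G,P,g)). -/
/-- The 4-dimensional real vector space of the Lie group example. -/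
abbrev V4 : Type := Fin 4 → ℝ

/-- The standard inner product on `ℝ⁴`. -/
def g4 (x y : V4) : ℝ := ∑ i, x i * y i

/-- The almost product structure `P` with `Pe₁ = e₃, Pe₂ = e₄, Pe₃ = e₁, Pe₄ = e₂`. -/
def P4 (x : V4) : V4 := ![x 2, x 3, x 0, x 1]

/-- The standard basis vectors `e₁, e₂, e₃, e₄` of `ℝ⁴`. -/
def e4 (i : Fin 4) : V4 := Pi.single i 1

/-- for the bracket (50), the standard inner product `g` and the
involution `P`, the Killing condition `g([x,y],Pz) + g([x,z],Py) = 0` holds, i.e. the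
associated metric `g̃(x,y) = g(x,Py)` is a Killing metric. -/
theorem stmt_11
    (l1 l2 l3 l4 : ℝ) (B : V4 → V4 → V4)
    (hBadd1 : ∀ x x' y, B (x + x') y = B x y + B x' y)
    (hBsmul1 : ∀ (a : ℝ) (x y : V4), B (a • x) y = a • B x y)
    (hBadd2 : ∀ x y y', B x (y + y') = B x y + B x y')
    (hBsmul2 : ∀ (a : ℝ) (x y : V4), B x (a • y) = a • B x y)
    (hBanti : ∀ x y, B x y = -B y x)
    (hB12 : B (e4 0) (e4 1) = l1 • e4 0 + l2 • e4 1)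
    (hB13 : B (e4 0) (e4 2) = l3 • e4 1 - l1 • e4 3)
    (hB14 : B (e4 0) (e4 3) = -(l3 • e4 0) - l2 • e4 3)
    (hB23 : B (e4 1) (e4 2) = l4 • e4 1 + l1 • e4 2)
    (hB24 : B (e4 1) (e4 3) = -(l4 • e4 0) + l2 • e4 2)
    (hB34 : B (e4 2) (e4 3) = l3 • e4 2 + l4 • e4 3)
    :
    ∀ x y z : V4, g4 (B x y) (P4 z) + g4 (B x z) (P4 y) = 0 := by
  -- diagonal vanishes
  have hB0 : ∀ v, B v v = 0 := by
    intro v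
    have h := hBanti v v
    have h2 : (2:ℝ) • B v v = 0 := by
      rw [two_smul]; nth_rewrite 2 [h]; simp
    have := smul_eq_zero.mp h2
    simpa using this
  -- reversed brackets
  have hB21 : B (e4 1) (e4 0) = -(l1 • e4 0 + l2 • e4 1) := by rw [hBanti, hB12]
  have hB31 : B (e4 2) (e4 0) = -(l3 • e4 1 - l1 • e4 3) := by rw [hBanti, hB13]
  have hB41 : B (e4 3) (e4 0) = -(-(l3 • e4 0) - l2 • e4 3) := by rw [hBanti, hB14]
  have hB32 : B (e4 2) (e4 1) = -(l4 • e4 1 + l1 • e4 2) := by rw [hBanti, hB23]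
  have hB42 : B (e4 3) (e4 1) = -(-(l4 • e4 0) + l2 • e4 2) := by rw [hBanti, hB24]
  have hB43 : B (e4 3) (e4 2) = -(l3 • e4 2 + l4 • e4 3) := by rw [hBanti, hB34]
  -- g4 linearity
  have hg_add : ∀ u v w : V4, g4 (u + v) w = g4 u w + g4 v w := by
    intro u v w
    simp [g4, add_mul, Finset.sum_add_distrib]
  have hg_smul : ∀ (a : ℝ) (u w : V4), g4 (a • u) w = a * g4 u w := by
    intro a u w
    simp [g4, Finset.mul_sum, mul_assoc]
  have hg_add2 : ∀ u v w : V4, g4 w (u + v) = g4 w u + g4 w v := by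
    intro u v w
    simp [g4, mul_add, Finset.sum_add_distrib]
  have hg_smul2 : ∀ (a : ℝ) (u w : V4), g4 w (a • u) = a * g4 w u := by
    intro a u w
    simp [g4, Finset.mul_sum]
    ring_nf
    simp [mul_comm, mul_left_comm]
  -- P4 linearity
  have hP_add : ∀ u v : V4, P4 (u + v) = P4 u + P4 v := by
    intro u v; funext i; fin_cases i <;> simp [P4]
  have hP_smul : ∀ (a : ℝ) (u : V4), P4 (a • u) = a • P4 u := by
    intro a u; funext i; fin_cases i <;> simp [P4]
  -- decomposition along the basis
  have hdec : ∀ v : V4, v = v 0 • e4 0 + v 1 • e4 1 + v 2 • e4 2 + v 3 • e4 3 := by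
    intro v
    funext j
    fin_cases j <;> simp [e4, Pi.single_apply]
  -- generic expansion lemma
  have key : ∀ (G : V4 → ℝ), (∀ u v, G (u + v) = G u + G v) →
      (∀ (a : ℝ) (u : V4), G (a • u) = a * G u) →
      ∀ v : V4, G v = v 0 * G (e4 0) + v 1 * G (e4 1) + v 2 * G (e4 2) + v 3 * G (e4 3) := by
    intro G hGa hGs v
    conv_lhs => rw [hdec v]
    rw [hGa, hGa, hGa, hGs, hGs, hGs, hGs]
  -- the Killing form
  set F : V4 → V4 → V4 → ℝ :=
    fun x y z => g4 (B x y) (P4 z) + g4 (B x z) (P4 y) with hF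
  -- basis cases
  have hbasis : ∀ i j k : Fin 4, F (e4 i) (e4 j) (e4 k) = 0 := by
    have hm0 : ∀ (h : (0:ℕ) < 4), (⟨0, h⟩ : Fin 4) = 0 := fun _ => rfl
    have hm1 : ∀ (h : (1:ℕ) < 4), (⟨1, h⟩ : Fin 4) = 1 := fun _ => rfl
    have hm2 : ∀ (h : (2:ℕ) < 4), (⟨2, h⟩ : Fin 4) = 2 := fun _ => rfl
    have hm3 : ∀ (h : (3:ℕ) < 4), (⟨3, h⟩ : Fin 4) = 3 := fun _ => rfl
    intro i j k
    simp only [hF]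
    fin_cases i <;> fin_cases j <;> fin_cases k <;>
      simp only [hm0, hm1, hm2, hm3, hB0, hB12, hB13, hB14, hB23, hB24, hB34,
        hB21, hB31, hB41, hB32, hB42, hB43] <;>
      simp [g4, P4, e4, Fin.sum_univ_four, Pi.single_apply]
  -- linearity of F in each slot
  have hF3a : ∀ x y u v, F x y (u + v) = F x y u + F x y v := by
    intro x y u v
    simp only [hF, hBadd2, hP_add, hg_add, hg_add2]
    ring
  have hF3s : ∀ x y (a : ℝ) u, F x y (a • u) = a * F x y u := by
    intro x y a u
    simp only [hF, hBsmul2, hP_smul, hg_smul, hg_smul2]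
    ring
  have hF2a : ∀ x z u v, F x (u + v) z = F x u z + F x v z := by
    intro x z u v
    simp only [hF, hBadd2, hP_add, hg_add, hg_add2]
    ring
  have hF2s : ∀ x z (a : ℝ) u, F x (a • u) z = a * F x u z := by
    intro x z a u
    simp only [hF, hBsmul2, hP_smul, hg_smul, hg_smul2]
    ring
  have hF1a : ∀ y z u v, F (u + v) y z = F u y z + F v y z := by
    intro y z u v
    simp only [hF, hBadd1, hg_add]
    ring
  have hF1s : ∀ y z (a : ℝ) u, F (a • u) y z = a * F u y z := by
    intro y z a u
    simp only [hF, hBsmul1, hg_smul]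
    ring
  -- extend basis result by trilinearity
  have h3 : ∀ (i j : Fin 4) (z : V4), F (e4 i) (e4 j) z = 0 := by
    intro i j z
    rw [key (fun v => F (e4 i) (e4 j) v) (hF3a _ _) (hF3s _ _) z]
    simp [hbasis]
  have h2 : ∀ (i : Fin 4) (y z : V4), F (e4 i) y z = 0 := by
    intro i y z
    rw [key (fun v => F (e4 i) v z) (hF2a _ _) (hF2s _ _) y]
    simp [h3]
  intro x y z
  show F x y z = 0
  rw [key (fun v => F v y z) (hF1a _ _) (hF1s _ _) x]
  simp [h2]
end

section
/- For the bracket (50) on ℝ⁴ and the linear involution P with Pe₁ = e₃, Pe₂ = e₄, Pe₃ = e₁, Pe₄ = e₂, the identity [Px,Py] + P[Px,y] + P[x,Py] + [x,y] = 0 holds for all x, y in ℝ⁴. (Equation (55) of the paper.) -/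
lemma decomp4 (x : V4) : x = x 0 • e4 0 + x 1 • e4 1 + x 2 • e4 2 + x 3 • e4 3 := by
  funext i
  fin_cases i <;> simp [e4, Pi.single, Function.update]

lemma P4_add (x y : V4) : P4 (x + y) = P4 x + P4 y := by
  funext i; fin_cases i <;> simp [P4]

lemma P4_sub (x y : V4) : P4 (x - y) = P4 x - P4 y := by
  funext i; fin_cases i <;> simp [P4]

lemma P4_neg (x : V4) : P4 (-x) = -P4 x := by
  funext i; fin_cases i <;> simp [P4]

lemma P4_zero : P4 0 = 0 := by
  funext i; fin_cases i <;> simp [P4]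

lemma P4_smul (a : ℝ) (x : V4) : P4 (a • x) = a • P4 x := by
  funext i; fin_cases i <;> simp [P4]

lemma P4_e0 : P4 (e4 0) = e4 2 := by
  funext i; fin_cases i <;> simp [P4, e4, Pi.single, Function.update]
lemma P4_e1 : P4 (e4 1) = e4 3 := by
  funext i; fin_cases i <;> simp [P4, e4, Pi.single, Function.update]
lemma P4_e2 : P4 (e4 2) = e4 0 := by
  funext i; fin_cases i <;> simp [P4, e4, Pi.single, Function.update]
lemma P4_e3 : P4 (e4 3) = e4 1 := by
  funext i; fin_cases i <;> simp [P4, e4, Pi.single, Function.update]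

set_option maxHeartbeats 1000000 in
/-- equation (55): for the bracket (50) and the involution `P`,
`[Px,Py] + P[Px,y] + P[x,Py] + [x,y] = 0`. -/
theorem stmt_12
    (l1 l2 l3 l4 : ℝ) (B : V4 → V4 → V4)
    (hBadd1 : ∀ x x' y, B (x + x') y = B x y + B x' y)
    (hBsmul1 : ∀ (a : ℝ) (x y : V4), B (a • x) y = a • B x y)
    (hBadd2 : ∀ x y y', B x (y + y') = B x y + B x y')
    (hBsmul2 : ∀ (a : ℝ) (x y : V4), B x (a • y) = a • B x y)
    (hBanti : ∀ x y, B x y = -B y x)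
    (hB12 : B (e4 0) (e4 1) = l1 • e4 0 + l2 • e4 1)
    (hB13 : B (e4 0) (e4 2) = l3 • e4 1 - l1 • e4 3)
    (hB14 : B (e4 0) (e4 3) = -(l3 • e4 0) - l2 • e4 3)
    (hB23 : B (e4 1) (e4 2) = l4 • e4 1 + l1 • e4 2)
    (hB24 : B (e4 1) (e4 3) = -(l4 • e4 0) + l2 • e4 2)
    (hB34 : B (e4 2) (e4 3) = l3 • e4 2 + l4 • e4 3)
    :
    ∀ x y : V4, B (P4 x) (P4 y) + P4 (B (P4 x) y) + P4 (B x (P4 y)) + B x y = 0 := by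
  have hdiag : ∀ x, B x x = 0 := by
    intro x
    have h : B x x + B x x = 0 := by nth_rewrite 2 [hBanti x x]; simp
    have h2 : (2 : ℝ) • B x x = 0 := by rw [two_smul]; exact h
    rcases smul_eq_zero.mp h2 with h3 | h3
    · norm_num at h3
    · exact h3
  have hB21 : B (e4 1) (e4 0) = -(l1 • e4 0 + l2 • e4 1) := by rw [hBanti, hB12]
  have hB31 : B (e4 2) (e4 0) = -(l3 • e4 1 - l1 • e4 3) := by rw [hBanti, hB13]
  have hB41 : B (e4 3) (e4 0) = -(-(l3 • e4 0) - l2 • e4 3) := by rw [hBanti, hB14]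
  have hB32 : B (e4 2) (e4 1) = -(l4 • e4 1 + l1 • e4 2) := by rw [hBanti, hB23]
  have hB42 : B (e4 3) (e4 1) = -(-(l4 • e4 0) + l2 • e4 2) := by rw [hBanti, hB24]
  have hB43 : B (e4 3) (e4 2) = -(l3 • e4 2 + l4 • e4 3) := by rw [hBanti, hB34]
  intro x y
  rw [decomp4 x, decomp4 y]
  simp only [P4_add, P4_smul, P4_e0, P4_e1, P4_e2, P4_e3, hBadd1, hBadd2, hBsmul1, hBsmul2,
    hB12, hB13, hB14, hB23, hB24, hB34, hB21, hB31, hB41, hB32, hB42, hB43,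
    hdiag, smul_zero, smul_add, smul_neg, smul_sub, P4_sub, P4_neg, P4_zero]
  module
end

section
/- Proposition 6.4: For the Lie algebra example on ℝ⁴, the RPT-connection ∇' and its torsion T satisfy T(x,y) = −[Px,Py] and ∇'ₓy = [x,y] + P[x,Py] for all x, y in ℝ⁴. -/
noncomputable section


/-- The covariant derivative `(∇ₓP)y = ∇ₓ(Py) - P(∇ₓy)` built from a connection `nb`. -/
def cdP (nb : V4 → V4 → V4) (x y : V4) : V4 := nb x (P4 y) - P4 (nb x y)

/-- The transformation tensor `Q(x,y) = -(1/4){(∇ₓP)(Py) - (∇_{Px}P)y - 2(∇_yP)(Px)}`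
of the RPT-connection. -/
def Q4 (nb : V4 → V4 → V4) (x y : V4) : V4 :=
  -((1/4 : ℝ) • (cdP nb x (P4 y) - cdP nb (P4 x) y - (2 : ℝ) • cdP nb y (P4 x)))

/-- The RPT-connection `∇'ₓy = ∇ₓy + Q(x,y)`. -/
def nbP (nb : V4 → V4 → V4) (x y : V4) : V4 := nb x y + Q4 nb x y

/-- The torsion `T(x,y) = ∇'ₓy - ∇'_yx - [x,y]` of the RPT-connection. -/
def Tor4 (B nb : V4 → V4 → V4) (x y : V4) : V4 := nbP nb x y - nbP nb y x - B x y

/-- The curvature operator `R(x,y)z = ∇ₓ(∇_yz) - ∇_y(∇ₓz) - ∇_{[x,y]}z` of a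
connection `nab` (on left-invariant fields of the Lie group with bracket `B`). -/
def R4 (B nab : V4 → V4 → V4) (x y z : V4) : V4 :=
  nab x (nab y z) - nab y (nab x z) - nab (B x y) z

/-- Explicit formula for the Lie bracket of the example. -/
def Bex (l1 l2 l3 l4 : ℝ) (x y : V4) : V4 :=
  ![l1*(x 0*y 1 - x 1*y 0) - l3*(x 0*y 3 - x 3*y 0) - l4*(x 1*y 3 - x 3*y 1),
    l2*(x 0*y 1 - x 1*y 0) + l3*(x 0*y 2 - x 2*y 0) + l4*(x 1*y 2 - x 2*y 1),
    l1*(x 1*y 2 - x 2*y 1) + l2*(x 1*y 3 - x 3*y 1) + l3*(x 2*y 3 - x 3*y 2),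
    -l1*(x 0*y 2 - x 2*y 0) - l2*(x 0*y 3 - x 3*y 0) + l4*(x 2*y 3 - x 3*y 2)]

/-- Explicit formula for the Levi-Civita connection of the example. -/
def Nex (l1 l2 l3 l4 : ℝ) (x y : V4) : V4 :=
  ![((2) * l1 * x 0 * y 1 + (-1) * l1 * x 2 * y 3 + (-1) * l1 * x 3 * y 2 + (2) * l2 * x 1 * y 1 + (-2) * l2 * x 3 * y 3 + (-2) * l3 * x 0 * y 3 + (1) * l3 * x 1 * y 2 + (1) * l3 * x 2 * y 1 + (-1) * l4 * x 1 * y 3 + (1) * l4 * x 3 * y 1) / 2,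
    ((-2) * l1 * x 0 * y 0 + (2) * l1 * x 2 * y 2 + (-2) * l2 * x 1 * y 0 + (1) * l2 * x 2 * y 3 + (1) * l2 * x 3 * y 2 + (1) * l3 * x 0 * y 2 + (-1) * l3 * x 2 * y 0 + (-1) * l4 * x 0 * y 3 + (2) * l4 * x 1 * y 2 + (-1) * l4 * x 3 * y 0) / 2,
    ((1) * l1 * x 0 * y 3 + (-2) * l1 * x 2 * y 1 + (1) * l1 * x 3 * y 0 + (1) * l2 * x 1 * y 3 + (-1) * l2 * x 3 * y 1 + (-1) * l3 * x 0 * y 1 + (-1) * l3 * x 1 * y 0 + (2) * l3 * x 2 * y 3 + (-2) * l4 * x 1 * y 1 + (2) * l4 * x 3 * y 3) / 2,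
    ((-1) * l1 * x 0 * y 2 + (1) * l1 * x 2 * y 0 + (-1) * l2 * x 1 * y 2 + (-1) * l2 * x 2 * y 1 + (2) * l2 * x 3 * y 0 + (2) * l3 * x 0 * y 0 + (-2) * l3 * x 2 * y 2 + (1) * l4 * x 0 * y 1 + (1) * l4 * x 1 * y 0 + (-2) * l4 * x 3 * y 2) / 2]

lemma gsingle (v : V4) (j : Fin 4) : g4 v (e4 j) = v j := by
  simp [g4, e4, Pi.single_apply, mul_ite]

lemma hdec (v : V4) : v = v 0 • e4 0 + v 1 • e4 1 + v 2 • e4 2 + v 3 • e4 3 := by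
  funext i; fin_cases i <;> simp [e4]

set_option maxHeartbeats 4000000 in
/-- Proposition 6.4: for the Lie algebra example on `ℝ⁴`, the
RPT-connection `∇'` and its torsion `T` satisfy `T(x,y) = -[Px,Py]` and
`∇'ₓy = [x,y] + P[x,Py]`. -/
theorem stmt_15
    (l1 l2 l3 l4 : ℝ) (B : V4 → V4 → V4)
    (hBadd1 : ∀ x x' y, B (x + x') y = B x y + B x' y)
    (hBsmul1 : ∀ (a : ℝ) (x y : V4), B (a • x) y = a • B x y)
    (hBadd2 : ∀ x y y', B x (y + y') = B x y + B x y')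
    (hBsmul2 : ∀ (a : ℝ) (x y : V4), B x (a • y) = a • B x y)
    (hBanti : ∀ x y, B x y = -B y x)
    (hB12 : B (e4 0) (e4 1) = l1 • e4 0 + l2 • e4 1)
    (hB13 : B (e4 0) (e4 2) = l3 • e4 1 - l1 • e4 3)
    (hB14 : B (e4 0) (e4 3) = -(l3 • e4 0) - l2 • e4 3)
    (hB23 : B (e4 1) (e4 2) = l4 • e4 1 + l1 • e4 2)
    (hB24 : B (e4 1) (e4 3) = -(l4 • e4 0) + l2 • e4 2)
    (hB34 : B (e4 2) (e4 3) = l3 • e4 2 + l4 • e4 3)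
    (nb : V4 → V4 → V4)
    (hK : ∀ x y z, 2 * g4 (nb x y) z = g4 (B x y) z + g4 (B z x) y + g4 (B z y) x)
    :
    ∀ x y : V4, Tor4 B nb x y = -B (P4 x) (P4 y) ∧
      nbP nb x y = B x y + P4 (B x (P4 y)) := by
  have hzero : ∀ v, B v v = 0 := by
    intro v
    have h := hBanti v v
    have h2 : B v v + B v v = 0 := by nth_rewrite 1 [h]; abel
    have := (two_smul ℝ (B v v)) ▸ h2
    simpa [smul_eq_zero] using this
  have hB21 : B (e4 1) (e4 0) = -(l1 • e4 0 + l2 • e4 1) := by rw [hBanti, hB12]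
  have hB31 : B (e4 2) (e4 0) = -(l3 • e4 1 - l1 • e4 3) := by rw [hBanti, hB13]
  have hB41 : B (e4 3) (e4 0) = -(-(l3 • e4 0) - l2 • e4 3) := by rw [hBanti, hB14]
  have hB32 : B (e4 2) (e4 1) = -(l4 • e4 1 + l1 • e4 2) := by rw [hBanti, hB23]
  have hB42 : B (e4 3) (e4 1) = -(-(l4 • e4 0) + l2 • e4 2) := by rw [hBanti, hB24]
  have hB43 : B (e4 3) (e4 2) = -(l3 • e4 2 + l4 • e4 3) := by rw [hBanti, hB34]
  have hBe : ∀ x y, B x y = Bex l1 l2 l3 l4 x y := by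
    intro x y
    conv_lhs => rw [hdec x, hdec y]
    simp only [hBadd1, hBadd2, hBsmul1, hBsmul2, hB12, hB13, hB14, hB23, hB24, hB34,
      hB21, hB31, hB41, hB32, hB42, hB43, hzero]
    funext i
    fin_cases i <;> simp [Bex, e4, Pi.single_apply] <;> ring
  have hN : ∀ x y, nb x y = Nex l1 l2 l3 l4 x y := by
    intro x y
    have h0 := hK x y (e4 0)
    have h1 := hK x y (e4 1)
    have h2 := hK x y (e4 2)
    have h3 := hK x y (e4 3)
    rw [gsingle, hBe, hBe, hBe] at h0 h1 h2 h3
    simp [g4, Bex, e4, Fin.sum_univ_four] at h0 h1 h2 h3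
    funext j
    fin_cases j <;> simp [Nex] <;> linarith
  intro x y
  refine ⟨?_, ?_⟩ <;>
  · funext j
    simp only [Tor4, nbP, Q4, cdP, hN, hBe, Pi.add_apply, Pi.sub_apply, Pi.neg_apply,
      Pi.smul_apply, smul_eq_mul]
    fin_cases j <;>
      · simp [Nex, Bex, P4]
        ring
end
end

section
/- Proposition 6.3: For the Lie algebra example on ℝ⁴, the scalar curvature of the RPT-connection ∇' equals τ' = −4(λ₁² + λ₂² + λ₃² + λ₄²), where τ' is the sum over i, j of g(R'(eᵢ,eⱼ)eⱼ, eᵢ) with R'(x,y)z = ∇'ₓ(∇'_y z) − ∇'_y(∇'ₓ z) − ∇'_{[x,y]}z; in particular τ' is negative whenever (λ₁,λ₂,λ₃,λ₄) ≠ (0,0,0,0). -/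
noncomputable section


/-! The RPT-connection of this example has the closed form
`∇'ₓ = ⟨λ, x⟩ J - ⟨λ, Px⟩ JP` with `λ = (λ₁, λ₂, λ₃, λ₄)` and `J` the complex structure
`e₁ ↦ -e₂, e₃ ↦ -e₄`. Since `J` commutes with `P`, every `∇'ₓ` lies in the commutative algebra
spanned by `J` and `JP`, so `R'(x, y) = -∇'_{[x,y]}`. In the trace defining `τ'` only the
brackets `[e₁,e₂]`, `[e₃,e₄]` (through `J`) and `[e₁,e₄]`, `[e₂,e₃]` (through `JP`) survive,
each pair contributing `-2|λ|²`. -/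

theorem bilinear_eq_sum_single {R M : Type*} [CommSemiring R] [AddCommMonoid M] [Module R M]
    {n : ℕ} (B : (Fin n → R) → (Fin n → R) → M)
    (hadd₁ : ∀ x x' y, B (x + x') y = B x y + B x' y)
    (hsmul₁ : ∀ (a : R) x y, B (a • x) y = a • B x y)
    (hadd₂ : ∀ x y y', B x (y + y') = B x y + B x y')
    (hsmul₂ : ∀ (a : R) x y, B x (a • y) = a • B x y) (x y : Fin n → R) :
    B x y = ∑ i, ∑ j, (x i * y j) • B (Pi.single i 1) (Pi.single j 1) := by
  let Φ := LinearMap.mk₂ R B hadd₁ hsmul₁ hadd₂ hsmul₂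
  have hx := (Pi.basisFun R (Fin n)).sum_repr x
  have hy := (Pi.basisFun R (Fin n)).sum_repr y
  simp only [Pi.basisFun_repr, Pi.basisFun_apply] at hx hy
  change Φ x y = ∑ i, ∑ j, (x i * y j) • Φ (Pi.single i 1) (Pi.single j 1)
  conv_lhs => rw [← hx, ← hy]
  simp only [map_sum, map_smul, LinearMap.sum_apply, LinearMap.smul_apply, Finset.smul_sum,
    smul_smul]
  rw [Finset.sum_comm]
  simp only [mul_comm]

lemma g4_e4 (x : V4) (k : Fin 4) : g4 x (e4 k) = x k := by
  simp [g4, e4, Pi.single_apply]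

def exampleBracket (l1 l2 l3 l4 : ℝ) (x y : V4) : V4 :=
  ![l1 * (x 0 * y 1 - x 1 * y 0) - l3 * (x 0 * y 3 - x 3 * y 0) - l4 * (x 1 * y 3 - x 3 * y 1),
    l2 * (x 0 * y 1 - x 1 * y 0) + l3 * (x 0 * y 2 - x 2 * y 0) + l4 * (x 1 * y 2 - x 2 * y 1),
    l1 * (x 1 * y 2 - x 2 * y 1) + l2 * (x 1 * y 3 - x 3 * y 1) + l3 * (x 2 * y 3 - x 3 * y 2),
    -l1 * (x 0 * y 2 - x 2 * y 0) - l2 * (x 0 * y 3 - x 3 * y 0) + l4 * (x 2 * y 3 - x 3 * y 2)]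

theorem exampleBracket_eq (l1 l2 l3 l4 : ℝ) (B : V4 → V4 → V4)
    (hBadd1 : ∀ x x' y, B (x + x') y = B x y + B x' y)
    (hBsmul1 : ∀ (a : ℝ) (x y : V4), B (a • x) y = a • B x y)
    (hBadd2 : ∀ x y y', B x (y + y') = B x y + B x y')
    (hBsmul2 : ∀ (a : ℝ) (x y : V4), B x (a • y) = a • B x y)
    (hBanti : ∀ x y, B x y = -B y x)
    (hB12 : B (e4 0) (e4 1) = l1 • e4 0 + l2 • e4 1)
    (hB13 : B (e4 0) (e4 2) = l3 • e4 1 - l1 • e4 3)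
    (hB14 : B (e4 0) (e4 3) = -(l3 • e4 0) - l2 • e4 3)
    (hB23 : B (e4 1) (e4 2) = l4 • e4 1 + l1 • e4 2)
    (hB24 : B (e4 1) (e4 3) = -(l4 • e4 0) + l2 • e4 2)
    (hB34 : B (e4 2) (e4 3) = l3 • e4 2 + l4 • e4 3) (x y : V4) :
    B x y = exampleBracket l1 l2 l3 l4 x y := by
  have hdiag : ∀ i, B (e4 i) (e4 i) = 0 := fun i => self_eq_neg.mp (hBanti _ _)
  have hexpand : B x y = ∑ i, ∑ j, (x i * y j) • B (e4 i) (e4 j) :=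
    bilinear_eq_sum_single B hBadd1 hBsmul1 hBadd2 hBsmul2 x y
  simp only [hexpand, Fin.sum_univ_four, hdiag, hB12, hB13, hB14, hB23, hB24, hB34,
    hBanti (e4 1) (e4 0), hBanti (e4 2) (e4 0), hBanti (e4 3) (e4 0),
    hBanti (e4 2) (e4 1), hBanti (e4 3) (e4 1), hBanti (e4 3) (e4 2)]
  ext k
  fin_cases k <;> simp [exampleBracket, e4] <;> ring

theorem apply_eq_of_koszul (B nb : V4 → V4 → V4)
    (hK : ∀ x y z, 2 * g4 (nb x y) z = g4 (B x y) z + g4 (B z x) y + g4 (B z y) x)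
    (x y : V4) (k : Fin 4) :
    nb x y k = (B x y k + g4 (B (e4 k) x) y + g4 (B (e4 k) y) x) / 2 := by
  have h := hK x y (e4 k)
  rw [g4_e4, g4_e4] at h
  linarith

def J4 (x : V4) : V4 := ![x 1, -x 0, x 3, -x 2]

def exampleRPT (l1 l2 l3 l4 : ℝ) (x y : V4) : V4 :=
  g4 ![l1, l2, l3, l4] x • J4 y - g4 ![l1, l2, l3, l4] (P4 x) • J4 (P4 y)

theorem nbP_eq_exampleRPT (l1 l2 l3 l4 : ℝ) (nb : V4 → V4 → V4)
    (hK : ∀ x y z, 2 * g4 (nb x y) z = g4 (exampleBracket l1 l2 l3 l4 x y) z +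
      g4 (exampleBracket l1 l2 l3 l4 z x) y + g4 (exampleBracket l1 l2 l3 l4 z y) x)
    (x y : V4) : nbP nb x y = exampleRPT l1 l2 l3 l4 x y := by
  have hnb := apply_eq_of_koszul _ nb hK
  ext k
  fin_cases k <;>
    simp [nbP, Q4, cdP, P4, hnb, exampleBracket, exampleRPT, J4, g4, Fin.sum_univ_four, e4,
      Matrix.vecHead, Matrix.vecTail] <;>
    ring

theorem exampleRPT_comm (l1 l2 l3 l4 : ℝ) (x y z : V4) :
    exampleRPT l1 l2 l3 l4 x (exampleRPT l1 l2 l3 l4 y z) =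
      exampleRPT l1 l2 l3 l4 y (exampleRPT l1 l2 l3 l4 x z) := by
  ext k
  fin_cases k <;> simp [exampleRPT, J4, P4, g4, Fin.sum_univ_four] <;> ring

theorem R4_eq_neg_of_comm (B nab : V4 → V4 → V4)
    (hcomm : ∀ x y z, nab x (nab y z) = nab y (nab x z)) (x y z : V4) :
    R4 B nab x y z = -nab (B x y) z := by
  simp [R4, hcomm x y z]

theorem scalarCurvature_exampleRPT (l1 l2 l3 l4 : ℝ) :
    ∑ i : Fin 4, ∑ j : Fin 4,
        g4 (R4 (exampleBracket l1 l2 l3 l4) (exampleRPT l1 l2 l3 l4) (e4 i) (e4 j) (e4 j)) (e4 i)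
      = -4 * (l1 ^ 2 + l2 ^ 2 + l3 ^ 2 + l4 ^ 2) := by
  simp only [R4_eq_neg_of_comm _ _ (exampleRPT_comm l1 l2 l3 l4), g4_e4]
  simp [Fin.sum_univ_four, exampleRPT, exampleBracket, J4, P4, g4, e4]
  ring

/-- Proposition 6.3: for the Lie algebra example on `ℝ⁴`, the scalar
curvature of the RPT-connection is `τ' = -4(λ₁² + λ₂² + λ₃² + λ₄²)`; in particular
`τ' < 0` whenever `(λ₁,λ₂,λ₃,λ₄) ≠ (0,0,0,0)`. -/
theorem stmt_16
    (l1 l2 l3 l4 : ℝ) (B : V4 → V4 → V4)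
    (hBadd1 : ∀ x x' y, B (x + x') y = B x y + B x' y)
    (hBsmul1 : ∀ (a : ℝ) (x y : V4), B (a • x) y = a • B x y)
    (hBadd2 : ∀ x y y', B x (y + y') = B x y + B x y')
    (hBsmul2 : ∀ (a : ℝ) (x y : V4), B x (a • y) = a • B x y)
    (hBanti : ∀ x y, B x y = -B y x)
    (hB12 : B (e4 0) (e4 1) = l1 • e4 0 + l2 • e4 1)
    (hB13 : B (e4 0) (e4 2) = l3 • e4 1 - l1 • e4 3)
    (hB14 : B (e4 0) (e4 3) = -(l3 • e4 0) - l2 • e4 3)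
    (hB23 : B (e4 1) (e4 2) = l4 • e4 1 + l1 • e4 2)
    (hB24 : B (e4 1) (e4 3) = -(l4 • e4 0) + l2 • e4 2)
    (hB34 : B (e4 2) (e4 3) = l3 • e4 2 + l4 • e4 3)
    (nb : V4 → V4 → V4)
    (hK : ∀ x y z, 2 * g4 (nb x y) z = g4 (B x y) z + g4 (B z x) y + g4 (B z y) x)
    :
    (∑ i : Fin 4, ∑ j : Fin 4,
        g4 (R4 B (nbP nb) (e4 i) (e4 j) (e4 j)) (e4 i))
      = -4 * (l1 ^ 2 + l2 ^ 2 + l3 ^ 2 + l4 ^ 2) ∧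
    (¬(l1 = 0 ∧ l2 = 0 ∧ l3 = 0 ∧ l4 = 0) →
      (∑ i : Fin 4, ∑ j : Fin 4,
        g4 (R4 B (nbP nb) (e4 i) (e4 j) (e4 j)) (e4 i)) < 0) := by
  have hB := exampleBracket_eq l1 l2 l3 l4 B hBadd1 hBsmul1 hBadd2 hBsmul2 hBanti
    hB12 hB13 hB14 hB23 hB24 hB34
  rw [funext₂ hB] at hK ⊢
  rw [funext₂ (nbP_eq_exampleRPT l1 l2 l3 l4 nb hK), scalarCurvature_exampleRPT]
  refine ⟨rfl, fun hne => ?_⟩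
  have hpos : 0 < l1 ^ 2 + l2 ^ 2 + l3 ^ 2 + l4 ^ 2 := by
    contrapose! hne
    have hsq : l1 ^ 2 = 0 ∧ l2 ^ 2 = 0 ∧ l3 ^ 2 = 0 ∧ l4 ^ 2 = 0 := by
      refine ⟨?_, ?_, ?_, ?_⟩ <;>
        linarith [sq_nonneg l1, sq_nonneg l2, sq_nonneg l3, sq_nonneg l4]
    simpa using hsq
  linarith
end
end

section
/- Proposition 6.5 (strong RPT-structure): For the Lie algebra example on ℝ⁴, the exterior derivative of the torsion 3-form of the RPT-connection vanishes: for all x, y, z, w in ℝ⁴, dT(x,y,z,w) = (∇'ₓT)(y,z,w) + (∇'_yT)(z,x,w) + (∇'_zT)(x,y,w) − (∇'_wT)(x,y,z) + 2σᵀ(x,y,z,w) = 0, where σᵀ(x,y,z,w) = g(T(x,y),T(z,w)) + g(T(y,z),T(x,w)) + g(T(z,x),T(y,w)). -/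
noncomputable section


/-- The torsion as a (0,3)-tensor: `T(x,y,z) = g(T(x,y),z)`. -/
def Tform4 (B nb : V4 → V4 → V4) (x y z : V4) : ℝ := g4 (Tor4 B nb x y) z

/-- The covariant derivative of the torsion with respect to the RPT-connection, on
left-invariant fields: `(∇'ₓT)(y,z,w) = -T(∇'ₓy,z,w) - T(y,∇'ₓz,w) - T(y,z,∇'ₓw)`. -/
def nbT4 (B nb : V4 → V4 → V4) (x y z w : V4) : ℝ :=
  -Tform4 B nb (nbP nb x y) z w - Tform4 B nb y (nbP nb x z) w
    - Tform4 B nb y z (nbP nb x w)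

/-- The 4-form `σᵀ(x,y,z,w) = g(T(x,y),T(z,w)) + g(T(y,z),T(x,w)) + g(T(z,x),T(y,w))`. -/
def sigmaT4 (B nb : V4 → V4 → V4) (x y z w : V4) : ℝ :=
  g4 (Tor4 B nb x y) (Tor4 B nb z w) + g4 (Tor4 B nb y z) (Tor4 B nb x w)
    + g4 (Tor4 B nb z x) (Tor4 B nb y w)

def BexA (l1 l2 l3 l4 : ℝ) (x y : V4) : V4 :=
  ![l1 * x 0 * y 1 + (-1) * l3 * x 0 * y 3 + (-1) * l1 * x 1 * y 0 + (-1) * l4 * x 1 * y 3 + l3 * x 3 * y 0 + l4 * x 3 * y 1,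
    l2 * x 0 * y 1 + l3 * x 0 * y 2 + (-1) * l2 * x 1 * y 0 + l4 * x 1 * y 2 + (-1) * l3 * x 2 * y 0 + (-1) * l4 * x 2 * y 1,
    l1 * x 1 * y 2 + l2 * x 1 * y 3 + (-1) * l1 * x 2 * y 1 + l3 * x 2 * y 3 + (-1) * l2 * x 3 * y 1 + (-1) * l3 * x 3 * y 2,
    (-1) * l1 * x 0 * y 2 + (-1) * l2 * x 0 * y 3 + l1 * x 2 * y 0 + l4 * x 2 * y 3 + l2 * x 3 * y 0 + (-1) * l4 * x 3 * y 2]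

def nbEA (l1 l2 l3 l4 : ℝ) (x y : V4) : V4 :=
  ![l1 * x 0 * y 1 + (-1) * l3 * x 0 * y 3 + l2 * x 1 * y 1 + (1/2) * l3 * x 1 * y 2 + (-1/2) * l4 * x 1 * y 3 + (1/2) * l3 * x 2 * y 1 + (-1/2) * l1 * x 2 * y 3 + (1/2) * l4 * x 3 * y 1 + (-1/2) * l1 * x 3 * y 2 + (-1) * l2 * x 3 * y 3,
    (-1) * l1 * x 0 * y 0 + (1/2) * l3 * x 0 * y 2 + (-1/2) * l4 * x 0 * y 3 + (-1) * l2 * x 1 * y 0 + l4 * x 1 * y 2 + (-1/2) * l3 * x 2 * y 0 + l1 * x 2 * y 2 + (1/2) * l2 * x 2 * y 3 + (-1/2) * l4 * x 3 * y 0 + (1/2) * l2 * x 3 * y 2,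
    (-1/2) * l3 * x 0 * y 1 + (1/2) * l1 * x 0 * y 3 + (-1/2) * l3 * x 1 * y 0 + (-1) * l4 * x 1 * y 1 + (1/2) * l2 * x 1 * y 3 + (-1) * l1 * x 2 * y 1 + l3 * x 2 * y 3 + (1/2) * l1 * x 3 * y 0 + (-1/2) * l2 * x 3 * y 1 + l4 * x 3 * y 3,
    l3 * x 0 * y 0 + (1/2) * l4 * x 0 * y 1 + (-1/2) * l1 * x 0 * y 2 + (1/2) * l4 * x 1 * y 0 + (-1/2) * l2 * x 1 * y 2 + (1/2) * l1 * x 2 * y 0 + (-1/2) * l2 * x 2 * y 1 + (-1) * l3 * x 2 * y 2 + l2 * x 3 * y 0 + (-1) * l4 * x 3 * y 2]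

def nbPEA (l1 l2 l3 l4 : ℝ) (x y : V4) : V4 :=
  ![l1 * x 0 * y 1 + (-1) * l3 * x 0 * y 3 + l2 * x 1 * y 1 + (-1) * l4 * x 1 * y 3 + l3 * x 2 * y 1 + (-1) * l1 * x 2 * y 3 + l4 * x 3 * y 1 + (-1) * l2 * x 3 * y 3,
    (-1) * l1 * x 0 * y 0 + l3 * x 0 * y 2 + (-1) * l2 * x 1 * y 0 + l4 * x 1 * y 2 + (-1) * l3 * x 2 * y 0 + l1 * x 2 * y 2 + (-1) * l4 * x 3 * y 0 + l2 * x 3 * y 2,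
    (-1) * l3 * x 0 * y 1 + l1 * x 0 * y 3 + (-1) * l4 * x 1 * y 1 + l2 * x 1 * y 3 + (-1) * l1 * x 2 * y 1 + l3 * x 2 * y 3 + (-1) * l2 * x 3 * y 1 + l4 * x 3 * y 3,
    l3 * x 0 * y 0 + (-1) * l1 * x 0 * y 2 + l4 * x 1 * y 0 + (-1) * l2 * x 1 * y 2 + l1 * x 2 * y 0 + (-1) * l3 * x 2 * y 2 + l2 * x 3 * y 0 + (-1) * l4 * x 3 * y 2]

def TorEA (l1 l2 l3 l4 : ℝ) (x y : V4) : V4 :=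
  ![(-1) * l3 * x 1 * y 2 + (-1) * l4 * x 1 * y 3 + l3 * x 2 * y 1 + (-1) * l1 * x 2 * y 3 + l4 * x 3 * y 1 + l1 * x 3 * y 2,
    l3 * x 0 * y 2 + l4 * x 0 * y 3 + (-1) * l3 * x 2 * y 0 + (-1) * l2 * x 2 * y 3 + (-1) * l4 * x 3 * y 0 + l2 * x 3 * y 2,
    (-1) * l3 * x 0 * y 1 + l1 * x 0 * y 3 + l3 * x 1 * y 0 + l2 * x 1 * y 3 + (-1) * l1 * x 3 * y 0 + (-1) * l2 * x 3 * y 1,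
    (-1) * l4 * x 0 * y 1 + (-1) * l1 * x 0 * y 2 + l4 * x 1 * y 0 + (-1) * l2 * x 1 * y 2 + l1 * x 2 * y 0 + l2 * x 2 * y 1]

set_option maxHeartbeats 4000000 in
/-- Proposition 6.5, strong RPT-structure: for the Lie algebra example
on `ℝ⁴`, the exterior derivative of the torsion 3-form of the RPT-connection vanishes:
`dT(x,y,z,w) = (∇'ₓT)(y,z,w) + (∇'_yT)(z,x,w) + (∇'_zT)(x,y,w) - (∇'_wT)(x,y,z)
  + 2σᵀ(x,y,z,w) = 0`. -/
theorem stmt_17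
    (l1 l2 l3 l4 : ℝ) (B : V4 → V4 → V4)
    (hBadd1 : ∀ x x' y, B (x + x') y = B x y + B x' y)
    (hBsmul1 : ∀ (a : ℝ) (x y : V4), B (a • x) y = a • B x y)
    (hBadd2 : ∀ x y y', B x (y + y') = B x y + B x y')
    (hBsmul2 : ∀ (a : ℝ) (x y : V4), B x (a • y) = a • B x y)
    (hBanti : ∀ x y, B x y = -B y x)
    (hB12 : B (e4 0) (e4 1) = l1 • e4 0 + l2 • e4 1)
    (hB13 : B (e4 0) (e4 2) = l3 • e4 1 - l1 • e4 3)
    (hB14 : B (e4 0) (e4 3) = -(l3 • e4 0) - l2 • e4 3)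
    (hB23 : B (e4 1) (e4 2) = l4 • e4 1 + l1 • e4 2)
    (hB24 : B (e4 1) (e4 3) = -(l4 • e4 0) + l2 • e4 2)
    (hB34 : B (e4 2) (e4 3) = l3 • e4 2 + l4 • e4 3)
    (nb : V4 → V4 → V4)
    (hK : ∀ x y z, 2 * g4 (nb x y) z = g4 (B x y) z + g4 (B z x) y + g4 (B z y) x)
    :
    ∀ x y z w : V4,
      nbT4 B nb x y z w + nbT4 B nb y z x w + nbT4 B nb z x y w
        - nbT4 B nb w x y z + 2 * sigmaT4 B nb x y z w = 0 := by
  have hBxx : ∀ v : V4, B v v = 0 := by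
    intro v
    have h : B v v + B v v = 0 := by
      nth_rewrite 1 [hBanti]
      simp
    funext i
    have h' := congrFun h i
    simp only [Pi.add_apply, Pi.zero_apply] at h' ⊢
    linarith
  have hB21 : B (e4 1) (e4 0) = -(l1 • e4 0 + l2 • e4 1) := by rw [hBanti, hB12]
  have hB31 : B (e4 2) (e4 0) = -(l3 • e4 1 - l1 • e4 3) := by rw [hBanti, hB13]
  have hB41 : B (e4 3) (e4 0) = -(-(l3 • e4 0) - l2 • e4 3) := by rw [hBanti, hB14]
  have hB32 : B (e4 2) (e4 1) = -(l4 • e4 1 + l1 • e4 2) := by rw [hBanti, hB23]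
  have hB42 : B (e4 3) (e4 1) = -(-(l4 • e4 0) + l2 • e4 2) := by rw [hBanti, hB24]
  have hB43 : B (e4 3) (e4 2) = -(l3 • e4 2 + l4 • e4 3) := by rw [hBanti, hB34]
  have decomp : ∀ v : V4, v = v 0 • e4 0 + v 1 • e4 1 + v 2 • e4 2 + v 3 • e4 3 := by
    intro v
    funext i
    fin_cases i <;>
      simp [e4, Pi.single_apply]
  have hBex : ∀ x y, B x y = BexA l1 l2 l3 l4 x y := by
    intro x y
    conv_lhs => rw [decomp x, decomp y]
    simp only [hBadd1, hBadd2, hBsmul1, hBsmul2, hB12, hB13, hB14, hB23, hB24, hB34,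
      hB21, hB31, hB41, hB32, hB42, hB43, hBxx]
    funext k
    fin_cases k <;>
      (simp [BexA, e4, Pi.single_apply, Pi.add_apply, Pi.smul_apply, Pi.neg_apply,
        Pi.sub_apply, smul_eq_mul]; ring)
  have hg : ∀ (v : V4) (k : Fin 4), g4 v (e4 k) = v k := by
    intro v k
    fin_cases k <;> simp [g4, e4, Fin.sum_univ_four, Pi.single_apply]
  have hnb : ∀ x y, nb x y = nbEA l1 l2 l3 l4 x y := by
    intro x y
    have key : ∀ k, 2 * nb x y k = BexA l1 l2 l3 l4 x y k
        + g4 (BexA l1 l2 l3 l4 (e4 k) x) y + g4 (BexA l1 l2 l3 l4 (e4 k) y) x := by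
      intro k
      have h := hK x y (e4 k)
      simp only [hg, hBex] at h
      exact h
    funext k
    have h := key k
    fin_cases k <;>
      (simp [BexA, nbEA, g4, e4, Fin.sum_univ_four, Pi.single_apply] at h ⊢; linarith)
  have hnbP : ∀ x y, nbP nb x y = nbPEA l1 l2 l3 l4 x y := by
    intro x y
    simp only [nbP, Q4, cdP, hnb]
    funext k
    fin_cases k <;>
      (simp [nbEA, nbPEA, P4, Pi.add_apply, Pi.sub_apply, Pi.neg_apply, Pi.smul_apply,
        smul_eq_mul]; ring)
  have hTor : ∀ x y, Tor4 B nb x y = TorEA l1 l2 l3 l4 x y := by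
    intro x y
    simp only [Tor4, hnbP, hBex]
    funext k
    fin_cases k <;>
      (simp [nbPEA, TorEA, BexA, Pi.sub_apply]; ring)
  intro x y z w
  simp only [nbT4, Tform4, sigmaT4, hTor, hnbP]
  simp only [TorEA, nbPEA, g4, Fin.sum_univ_four, Matrix.cons_val_zero, Matrix.cons_val_one,
    Matrix.head_cons, Matrix.cons_val_two, Matrix.tail_cons, Matrix.cons_val_three]
  ring
end
end

section
/- Theorem 7.7: For the Lie algebra example on ℝ⁴, the following three conditions are equivalent: (i) the curvature tensor R'(x,y,z,w) = g(R'(x,y)z, w) of the RPT-connection ∇' is a Riemannian P-tensor, i.e. it satisfies R'(x,y,z,w) = −R'(y,x,z,w) = −R'(x,y,w,z), the first Bianchi identity R'(x,y,z,w) + R'(y,z,x,w) + R'(z,x,y,w) = 0, and R'(x,y,Pz,Pw) = R'(x,y,z,w), for all x, y, z, w; (ii) the torsion T of ∇' is parallel, i.e. (∇'ₓT)(y,z,w) = 0 for all x, y, z, w; (iii) there exists ε ∈ {1, −1} with λ₃ = ελ₁ and λ₄ = ελ₂. -/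
noncomputable section


/-- The curvature (0,4)-tensor `R'(x,y,z,w) = g(R'(x,y)z,w)` of the RPT-connection. -/
def Rform4 (B nb : V4 → V4 → V4) (x y z w : V4) : ℝ := g4 (R4 B (nbP nb) x y z) w


/-- Componentwise extensionality for `V4`. -/
lemma V4ext (u v : V4) (h0 : u 0 = v 0) (h1 : u 1 = v 1) (h2 : u 2 = v 2)
    (h3 : u 3 = v 3) : u = v := by
  funext k; fin_cases k; exacts [h0, h1, h2, h3]

/-- Explicit formula for the Lie bracket. -/
def Bxx (l1 l2 l3 l4 : ℝ) (x y : V4) : V4 :=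
  ![l1*(x 0*y 1 - x 1*y 0) - l3*(x 0*y 3 - x 3*y 0) - l4*(x 1*y 3 - x 3*y 1),
    l2*(x 0*y 1 - x 1*y 0) + l3*(x 0*y 2 - x 2*y 0) + l4*(x 1*y 2 - x 2*y 1),
    l1*(x 1*y 2 - x 2*y 1) + l2*(x 1*y 3 - x 3*y 1) + l3*(x 2*y 3 - x 3*y 2),
    -(l1*(x 0*y 2 - x 2*y 0)) - l2*(x 0*y 3 - x 3*y 0) + l4*(x 2*y 3 - x 3*y 2)]

def axx (l1 l2 l3 l4 : ℝ) (x : V4) : ℝ := l1 * x 0 + l2 * x 1 + l3 * x 2 + l4 * x 3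
def bxx (l1 l2 l3 l4 : ℝ) (x : V4) : ℝ := l3 * x 0 + l4 * x 1 + l1 * x 2 + l2 * x 3

/-- Explicit formula for the RPT-connection. -/
def NPx (l1 l2 l3 l4 : ℝ) (x y : V4) : V4 :=
  ![axx l1 l2 l3 l4 x * y 1 - bxx l1 l2 l3 l4 x * y 3,
    -(axx l1 l2 l3 l4 x * y 0) + bxx l1 l2 l3 l4 x * y 2,
    -(bxx l1 l2 l3 l4 x * y 1) + axx l1 l2 l3 l4 x * y 3,
    bxx l1 l2 l3 l4 x * y 0 - axx l1 l2 l3 l4 x * y 2]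

/-- Explicit formula for the Levi-Civita connection. -/
def Nx (l1 l2 l3 l4 : ℝ) (x y : V4) : V4 :=
  ![l1*x 0*y 1 - l3*x 0*y 3 + l2*x 1*y 1 + l3/2*x 1*y 2 - l4/2*x 1*y 3 + l3/2*x 2*y 1
      - l1/2*x 2*y 3 + l4/2*x 3*y 1 - l1/2*x 3*y 2 - l2*x 3*y 3,
    -(l1*x 0*y 0) + l3/2*x 0*y 2 - l4/2*x 0*y 3 - l2*x 1*y 0 + l4*x 1*y 2 - l3/2*x 2*y 0
      + l1*x 2*y 2 + l2/2*x 2*y 3 - l4/2*x 3*y 0 + l2/2*x 3*y 2,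
    -(l3/2*x 0*y 1) + l1/2*x 0*y 3 - l3/2*x 1*y 0 - l4*x 1*y 1 + l2/2*x 1*y 3 - l1*x 2*y 1
      + l3*x 2*y 3 + l1/2*x 3*y 0 - l2/2*x 3*y 1 + l4*x 3*y 3,
    l3*x 0*y 0 + l4/2*x 0*y 1 - l1/2*x 0*y 2 + l4/2*x 1*y 0 - l2/2*x 1*y 2 + l1/2*x 2*y 0
      - l2/2*x 2*y 1 - l3*x 2*y 2 + l2*x 3*y 0 - l4*x 3*y 2]

lemma eps_exists (l1 l2 l3 l4 : ℝ) (E1 : l3^2 = l1^2) (E2 : l4^2 = l2^2)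
    (E3 : l2*l3 = l1*l4) :
    ∃ ε : ℝ, (ε = 1 ∨ ε = -1) ∧ l3 = ε * l1 ∧ l4 = ε * l2 := by
  by_cases h1 : l1 = 0
  · subst h1
    have h3 : l3 = 0 := by nlinarith
    have : l4 = l2 ∨ l4 = -l2 := by
      have h : (l4 - l2) * (l4 + l2) = 0 := by linear_combination E2
      rcases mul_eq_zero.mp h with h | h
      · exact Or.inl (by linarith)
      · exact Or.inr (by linarith)
    rcases this with h | h
    · exact ⟨1, Or.inl rfl, by simp [h3], by linarith⟩
    · exact ⟨-1, Or.inr rfl, by simp [h3], by linarith⟩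
  · have h13 : l3 = l1 ∨ l3 = -l1 := by
      have h : (l3 - l1) * (l3 + l1) = 0 := by linear_combination E1
      rcases mul_eq_zero.mp h with h | h
      · exact Or.inl (by linarith)
      · exact Or.inr (by linarith)
    rcases h13 with h | h
    · refine ⟨1, Or.inl rfl, by linarith, ?_⟩
      have h4 : l1 * (l4 - l2) = 0 := by linear_combination -E3 + (l2 : ℝ) * h
      rcases mul_eq_zero.mp h4 with h' | h'
      · exact absurd h' h1
      · linarith
    · refine ⟨-1, Or.inr rfl, by linarith, ?_⟩
      have h4 : l1 * (l4 + l2) = 0 := by linear_combination -E3 + (l2 : ℝ) * h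
      rcases mul_eq_zero.mp h4 with h' | h'
      · exact absurd h' h1
      · linarith


set_option maxHeartbeats 4000000 in
/-- Theorem 7.7: for the Lie algebra example on `ℝ⁴` the following are
equivalent: (i) the curvature tensor `R'` of the RPT-connection is a Riemannian
P-tensor; (ii) the torsion `T` of the RPT-connection is parallel; (iii) `λ₃ = ελ₁`,
`λ₄ = ελ₂` for some `ε = ±1`. -/
theorem stmt_18
    (l1 l2 l3 l4 : ℝ) (B : V4 → V4 → V4)
    (hBadd1 : ∀ x x' y, B (x + x') y = B x y + B x' y)
    (hBsmul1 : ∀ (a : ℝ) (x y : V4), B (a • x) y = a • B x y)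
    (hBadd2 : ∀ x y y', B x (y + y') = B x y + B x y')
    (hBsmul2 : ∀ (a : ℝ) (x y : V4), B x (a • y) = a • B x y)
    (hBanti : ∀ x y, B x y = -B y x)
    (hB12 : B (e4 0) (e4 1) = l1 • e4 0 + l2 • e4 1)
    (hB13 : B (e4 0) (e4 2) = l3 • e4 1 - l1 • e4 3)
    (hB14 : B (e4 0) (e4 3) = -(l3 • e4 0) - l2 • e4 3)
    (hB23 : B (e4 1) (e4 2) = l4 • e4 1 + l1 • e4 2)
    (hB24 : B (e4 1) (e4 3) = -(l4 • e4 0) + l2 • e4 2)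
    (hB34 : B (e4 2) (e4 3) = l3 • e4 2 + l4 • e4 3)
    (nb : V4 → V4 → V4)
    (hK : ∀ x y z, 2 * g4 (nb x y) z = g4 (B x y) z + g4 (B z x) y + g4 (B z y) x)
    :
    (((∀ x y z w : V4, Rform4 B nb x y z w = -Rform4 B nb y x z w ∧
          Rform4 B nb x y z w = -Rform4 B nb x y w z) ∧
        (∀ x y z w : V4,
          Rform4 B nb x y z w + Rform4 B nb y z x w + Rform4 B nb z x y w = 0) ∧
        (∀ x y z w : V4, Rform4 B nb x y (P4 z) (P4 w) = Rform4 B nb x y z w))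
      ↔ (∃ ε : ℝ, (ε = 1 ∨ ε = -1) ∧ l3 = ε * l1 ∧ l4 = ε * l2)) ∧
    ((∀ x y z w : V4, nbT4 B nb x y z w = 0)
      ↔ (∃ ε : ℝ, (ε = 1 ∨ ε = -1) ∧ l3 = ε * l1 ∧ l4 = ε * l2)) := by
  -- Step 1: the bracket vanishes on the diagonal.
  have hBii : ∀ v, B v v = 0 := by
    intro v
    have h := hBanti v v
    funext k
    have h2 := congrFun h k
    simp only [Pi.neg_apply] at h2
    have h3 : B v v k = 0 := by linarith
    simpa using h3
  have hdec : ∀ x : V4, x = x 0 • e4 0 + x 1 • e4 1 + x 2 • e4 2 + x 3 • e4 3 := by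
    intro x; funext k; fin_cases k <;> simp [e4]
  -- Step 2: closed formula for the bracket.
  have hBv : ∀ x y, B x y = Bxx l1 l2 l3 l4 x y := by
    intro x y
    conv_lhs => rw [hdec x, hdec y]
    simp only [hBadd1, hBadd2, hBsmul1, hBsmul2]
    rw [hB12, hB13, hB14, hB23, hB24, hB34,
      hBanti (e4 1) (e4 0), hBanti (e4 2) (e4 0), hBanti (e4 3) (e4 0),
      hBanti (e4 2) (e4 1), hBanti (e4 3) (e4 1), hBanti (e4 3) (e4 2),
      hB12, hB13, hB14, hB23, hB24, hB34, hBii, hBii, hBii, hBii]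
    funext k
    fin_cases k <;>
      simp [Bxx, e4, Pi.single_apply, Fin.sum_univ_four] <;> ring
  -- Step 3: closed formula for the Levi-Civita connection.
  have key : ∀ (x y : V4) (k : Fin 4),
      2 * g4 (nb x y) (e4 k) = g4 (Bxx l1 l2 l3 l4 x y) (e4 k)
        + g4 (Bxx l1 l2 l3 l4 (e4 k) x) y + g4 (Bxx l1 l2 l3 l4 (e4 k) y) x := by
    intro x y k; rw [← hBv, ← hBv, ← hBv]; exact hK x y (e4 k)
  have hnb : ∀ x y, nb x y = Nx l1 l2 l3 l4 x y := by
    intro x y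
    refine V4ext _ _ ?_ ?_ ?_ ?_
    · have h := key x y 0
      simp [g4, e4, Fin.sum_univ_four, Bxx, Nx] at h ⊢; linarith
    · have h := key x y 1
      simp [g4, e4, Fin.sum_univ_four, Bxx, Nx] at h ⊢; linarith
    · have h := key x y 2
      simp [g4, e4, Fin.sum_univ_four, Bxx, Nx] at h ⊢; linarith
    · have h := key x y 3
      simp [g4, e4, Fin.sum_univ_four, Bxx, Nx] at h ⊢; linarith
  -- Step 4: closed formula for the RPT-connection.
  have hNP : ∀ x y, nbP nb x y = NPx l1 l2 l3 l4 x y := by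
    intro x y
    refine V4ext _ _ ?_ ?_ ?_ ?_ <;>
    · simp only [nbP, Q4, cdP, hnb, P4, Nx, NPx, axx, bxx, Pi.add_apply, Pi.sub_apply,
        Pi.neg_apply, Pi.smul_apply, smul_eq_mul, Matrix.cons_val_zero, Matrix.cons_val_one,
        Matrix.cons_val_two, Matrix.cons_val_three, Matrix.tail_cons, Matrix.head_cons,
        Matrix.cons_val_fin_one]
      ring
  constructor
  · constructor
    · rintro ⟨-, hBi, -⟩
      have h1 := hBi (e4 0) (e4 1) (e4 3) (e4 2)
      have h2 := hBi (e4 0) (e4 1) (e4 2) (e4 3)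
      have h3 := hBi (e4 0) (e4 1) (e4 2) (e4 0)
      simp [Rform4, R4, hNP, hBv, g4, Fin.sum_univ_four, NPx, Bxx, axx, bxx, e4,
        Pi.single_apply, Pi.sub_apply, Matrix.cons_val_zero, Matrix.cons_val_one,
        Matrix.cons_val_two, Matrix.cons_val_three, Matrix.tail_cons,
        Matrix.head_cons] at h1 h2 h3
      exact eps_exists l1 l2 l3 l4 (by linear_combination h1) (by linear_combination -h2)
        (by linear_combination h3)
    · rintro ⟨ε, hε, h3, h4⟩
      refine ⟨?_, ?_, ?_⟩
      · intro x y z w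
        constructor <;>
        · simp only [Rform4, R4, hNP, hBv, g4, Fin.sum_univ_four, NPx, Bxx, axx, bxx,
            Pi.sub_apply, Matrix.cons_val_zero, Matrix.cons_val_one, Matrix.cons_val_two,
            Matrix.cons_val_three, Matrix.tail_cons, Matrix.head_cons]
          ring
      · intro x y z w
        subst h3 h4
        rcases hε with h | h <;> subst h <;>
        · simp only [Rform4, R4, hNP, hBv, g4, Fin.sum_univ_four, NPx, Bxx, axx, bxx,
            Pi.sub_apply, Matrix.cons_val_zero, Matrix.cons_val_one, Matrix.cons_val_two,
            Matrix.cons_val_three, Matrix.tail_cons, Matrix.head_cons]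
          ring
      · intro x y z w
        simp only [Rform4, R4, hNP, hBv, g4, Fin.sum_univ_four, NPx, Bxx, axx, bxx, P4,
          Pi.sub_apply, Matrix.cons_val_zero, Matrix.cons_val_one, Matrix.cons_val_two,
          Matrix.cons_val_three, Matrix.tail_cons, Matrix.head_cons]
        ring
  · constructor
    · intro hT
      have h1 := hT (e4 0) (e4 1) (e4 2) (e4 3)
      have h2 := hT (e4 1) (e4 0) (e4 2) (e4 3)
      have h3 := hT (e4 0) (e4 0) (e4 1) (e4 2)
      simp [nbT4, Tform4, Tor4, hNP, hBv, g4, Fin.sum_univ_four, NPx, Bxx, axx, bxx, e4,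
        Pi.single_apply, Pi.sub_apply, Matrix.cons_val_zero, Matrix.cons_val_one,
        Matrix.cons_val_two, Matrix.cons_val_three, Matrix.tail_cons,
        Matrix.head_cons] at h1 h2 h3
      exact eps_exists l1 l2 l3 l4 (by linear_combination -h1) (by linear_combination h2)
        (by linear_combination h3)
    · rintro ⟨ε, hε, h3, h4⟩
      intro x y z w
      subst h3 h4
      rcases hε with h | h <;> subst h <;>
      · simp only [nbT4, Tform4, Tor4, hNP, hBv, g4, Fin.sum_univ_four, NPx, Bxx, axx, bxx,
          Pi.sub_apply, Matrix.cons_val_zero, Matrix.cons_val_one, Matrix.cons_val_two,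
          Matrix.cons_val_three, Matrix.tail_cons, Matrix.head_cons]
        ring
end
end
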